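/- Fenchel–Rockafellar duality: let E be a locally convex Hausdorff real topological vector space with dual E*, f : E → ℝ ∪ {+∞} proper convex, g : E → ℝ ∪ {−∞} proper concave. Suppose there is a point x₀ at which f is continuous and both f(x₀) and g(x₀) are finite. Then inf_{x∈E}(f(x) − g(x)) = max_{y∈E*}(g_*(y) − f*(y)), and the maximum on the right is attained. -/

import Mathlib

noncomputable section

variable {E : Type*} [AddCommGroup E] [Module ℝ E] [TopologicalSpace E]
  [IsTopologicalAddGroup E] [ContinuousSMul ℝ E] [LocallyConvexSpace ℝ E] [T2Space E]

/-- Convex conjugate `f*(y) = sup_x (⟨y,x⟩ − f(x))` over the continuous dual. -/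
def fconj (f : E → EReal) (y : E →L[ℝ] ℝ) : EReal :=
  ⨆ x, (((y x : ℝ) : EReal) - f x)

/-- Concave conjugate `g_*(y) = inf_x (⟨y,x⟩ − g(x))`. -/
def gconj (g : E → EReal) (y : E →L[ℝ] ℝ) : EReal :=
  ⨅ x, (((y x : ℝ) : EReal) - g x)

/-!
The strict epigraph of `f` and the hypograph of `g + m`, where `m = inf (f - g)`, are disjoint
convex subsets of `E × ℝ`, and by continuity of `f` the first one has interior points above `x₀`.
A functional separating them cannot be vertical, since it is strictly smaller at such an interior
point `(x₀, t)` than at `(x₀, g x₀)`; normalised, it yields a continuous affine function `y - r`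
with `g + m ≤ y - r ≤ f`, whence `f* y ≤ r` and `r + m ≤ g_* y`. Weak duality
`g_* y - f* y ≤ inf (f - g)` holds for every `y` under the conventions of `EReal`; it gives the
reverse inequality and settles the case `m = ⊥`.
-/

-- Every case holds, thanks to the convention `⊥ + ⊤ = ⊥` of `EReal`.
theorem EReal.coe_sub_sub_coe_sub_le (c : ℝ) (a b : EReal) : (c - b) - (c - a) ≤ a - b := by
  induction a using EReal.rec <;> induction b using EReal.rec
  case coe.coe a b => exact_mod_cast (sub_sub_sub_cancel_left b a c).le
  all_goals simp

def strictEpigraph {α : Type*} (f : α → EReal) : Set (α × ℝ) := {p | f p.1 < p.2}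

def hypograph {α : Type*} (g : α → EReal) : Set (α × ℝ) := {p | (p.2 : EReal) ≤ g p.1}

theorem disjoint_strictEpigraph_hypograph {α : Type*} {f g : α → EReal} (hgf : ∀ x, g x ≤ f x) :
    Disjoint (strictEpigraph f) (hypograph g) :=
  Set.disjoint_left.2 fun p (hf : f p.1 < p.2) (hg : (p.2 : EReal) ≤ g p.1) =>
    (hf.trans_le (hg.trans (hgf p.1))).false

theorem hypograph_const_add {F : Type*} [AddZeroClass F] (g : F → EReal) (m : ℝ) :
    hypograph (fun x => m + g x) = (fun p => ((0 : F), -m) + p) ⁻¹' hypograph g := by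
  ext ⟨x, t⟩
  simp only [hypograph, Set.mem_ofPred_eq, Set.mem_preimage, Prod.mk_add_mk, zero_add]
  rw [neg_add_eq_sub, EReal.coe_sub, add_comm,
    EReal.sub_le_iff_le_add (.inl (EReal.coe_ne_bot m)) (.inl (EReal.coe_ne_top m))]

section Convexity

variable {F : Type*} [AddCommMonoid F] [Module ℝ F]

theorem convex_strictEpigraph {f : F → EReal} (hf : ∀ x, f x ≠ ⊥)
    (hfconv : ∀ (x y : F) (t : ℝ), 0 ≤ t → t ≤ 1 →
      f (t • x + (1 - t) • y) ≤ ((t : EReal)) * f x + (((1 - t : ℝ) : EReal)) * f y) :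
    Convex ℝ (strictEpigraph f) := by
  rintro ⟨x, s⟩ (hx : f x < s) ⟨y, t⟩ (hy : f y < t) a b ha hb hab
  obtain rfl : b = 1 - a := by linarith
  have hfxy := hfconv x y a ha (by linarith)
  lift f x to ℝ using ⟨hx.ne_top, hf x⟩ with fx
  lift f y to ℝ using ⟨hy.ne_top, hf y⟩ with fy
  have hx : fx < s := mod_cast hx
  have hy : fy < t := mod_cast hy
  show f (a • x + (1 - a) • y) < ((a * s + (1 - a) * t : ℝ) : EReal)
  calc _ ≤ ((a * fx + (1 - a) * fy : ℝ) : EReal) := mod_cast hfxy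
    _ < _ := mod_cast (by rcases ha.eq_or_lt with rfl | ha <;> nlinarith)

theorem convex_hypograph {g : F → EReal} (hg : ∀ x, g x ≠ ⊤)
    (hgconc : ∀ (x y : F) (t : ℝ), 0 ≤ t → t ≤ 1 →
      ((t : EReal)) * g x + (((1 - t : ℝ) : EReal)) * g y ≤ g (t • x + (1 - t) • y)) :
    Convex ℝ (hypograph g) := by
  rintro ⟨x, s⟩ (hx : s ≤ g x) ⟨y, t⟩ (hy : t ≤ g y) a b ha hb hab
  obtain rfl : b = 1 - a := by linarith
  have hgxy := hgconc x y a ha (by linarith)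
  lift g x to ℝ using ⟨hg x, ne_bot_of_le_ne_bot (EReal.coe_ne_bot s) hx⟩ with gx
  lift g y to ℝ using ⟨hg y, ne_bot_of_le_ne_bot (EReal.coe_ne_bot t) hy⟩ with gy
  have hx : s ≤ gx := mod_cast hx
  have hy : t ≤ gy := mod_cast hy
  show ((a * s + (1 - a) * t : ℝ) : EReal) ≤ g (a • x + (1 - a) • y)
  calc _ ≤ ((a * gx + (1 - a) * gy : ℝ) : EReal) := mod_cast (by nlinarith)
    _ ≤ _ := mod_cast hgxy

end Convexity

theorem mem_interior_strictEpigraph {F : Type*} [TopologicalSpace F] {f : F → EReal} {x₀ : F}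
    {t : ℝ} (hf : ContinuousAt f x₀) (ht : f x₀ < t) : (x₀, t) ∈ interior (strictEpigraph f) :=
  mem_interior_iff_mem_nhds.2 <| (hf.comp continuousAt_fst).eventually_lt
    (continuous_coe_real_ereal.continuousAt.comp continuousAt_snd) ht

section Conjugates

variable {F : Type*} [AddCommGroup F] [Module ℝ F] [TopologicalSpace F] {f g : F → EReal}

theorem fconj_le_coe {y : F →L[ℝ] ℝ} {r : ℝ}
    (h : ∀ x, ((y x - r : ℝ) : EReal) ≤ f x) : fconj f y ≤ r := by
  refine iSup_le fun x => ?_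
  have hx := h x
  generalize f x = a at hx ⊢
  induction a using EReal.rec
  · exact absurd (le_bot_iff.1 hx) (EReal.coe_ne_bot _)
  · norm_cast at hx ⊢; linarith
  · simp

theorem coe_le_gconj {y : F →L[ℝ] ℝ} {r : ℝ}
    (h : ∀ x, g x ≤ ((y x - r : ℝ) : EReal)) : (r : EReal) ≤ gconj g y := by
  refine le_iInf fun x => ?_
  have hx := h x
  generalize g x = a at hx ⊢
  induction a using EReal.rec
  · simp
  · norm_cast at hx ⊢; linarith
  · exact absurd (top_le_iff.1 hx) (EReal.coe_ne_top _)

theorem gconj_sub_fconj_le_iInf (y : F →L[ℝ] ℝ) :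
    gconj g y - fconj f y ≤ ⨅ x, f x - g x :=
  le_iInf fun x => (EReal.sub_le_sub (iInf_le _ x) (le_iSup _ x)).trans
    (EReal.coe_sub_sub_coe_sub_le _ _ _)

end Conjugates

theorem geometric_hahn_banach_of_nonempty_interior_strict {F : Type*} [AddCommGroup F] [Module ℝ F]
    [TopologicalSpace F] [IsTopologicalAddGroup F] [ContinuousSMul ℝ F] {s t : Set F}
    (hs : Convex ℝ s) (ht : Convex ℝ t) (hsint : (interior s).Nonempty) (hst : Disjoint s t) :
    ∃ (φ : F →L[ℝ] ℝ) (u : ℝ),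
      (∀ a ∈ interior s, φ a < u) ∧ (∀ a ∈ s, φ a ≤ u) ∧ ∀ b ∈ t, u ≤ φ b := by
  obtain ⟨φ, u, hlt, hge⟩ :=
    geometric_hahn_banach_open hs.interior isOpen_interior ht (hst.mono_left interior_subset)
  refine ⟨φ, u, hlt, fun a ha => ?_, hge⟩
  have hs_sub : s ⊆ closure (interior s) :=
    hs.closure_interior_eq_closure_of_nonempty_interior hsint ▸ subset_closure
  exact closure_minimal (fun x hx => (hlt x hx).le) (isClosed_le φ.continuous continuous_const)
    (hs_sub ha)

theorem ContinuousLinearMap.apply_pair_eq_add_mul {F : Type*} [AddCommMonoid F] [Module ℝ F] [TopologicalSpace F]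
    (φ : (F × ℝ) →L[ℝ] ℝ) (x : F) (t : ℝ) : φ (x, t) = φ (x, 0) + t * φ (0, 1) := by
  rw [← smul_eq_mul, ← map_smul, ← map_add, Prod.smul_mk, smul_zero, smul_eq_mul, mul_one,
    Prod.mk_add_mk, add_zero, zero_add]

section Sandwich

variable {F : Type*} [AddCommGroup F] [Module ℝ F] [TopologicalSpace F]
  [IsTopologicalAddGroup F] [ContinuousSMul ℝ F] {f g : F → EReal} {x₀ : F}

theorem exists_nonvertical_separation (hf : Convex ℝ (strictEpigraph f))
    (hg : Convex ℝ (hypograph g)) (hgf : ∀ x, g x ≤ f x) (hfc : ContinuousAt f x₀)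
    (hfx₀ : f x₀ ≠ ⊤) (hgx₀ : g x₀ ≠ ⊥) :
    ∃ (ℓ : F →L[ℝ] ℝ) (u d : ℝ), 0 < d ∧ (∀ x (s : ℝ), f x < s → ℓ x - s * d ≤ u) ∧
      ∀ x (s : ℝ), (s : EReal) ≤ g x → u ≤ ℓ x - s * d := by
  obtain ⟨t, hft, -⟩ := EReal.lt_iff_exists_real_btwn.1 hfx₀.lt_top
  have hgx₀_top : g x₀ ≠ ⊤ := ((hgf x₀).trans_lt hfx₀.lt_top).ne
  lift g x₀ to ℝ using ⟨hgx₀_top, hgx₀⟩ with b hb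
  have hbt : b < t := EReal.coe_lt_coe_iff.1 (hb ▸ (hgf x₀).trans_lt hft)
  obtain ⟨φ, u, hlt, hle, hge⟩ := geometric_hahn_banach_of_nonempty_interior_strict hf hg
    ⟨_, mem_interior_strictEpigraph hfc hft⟩ (disjoint_strictEpigraph_hypograph hgf)
  set ℓ := φ.comp (ContinuousLinearMap.inl ℝ F ℝ)
  have hφ : ∀ x s, φ (x, s) = ℓ x + s * φ (0, 1) := φ.apply_pair_eq_add_mul
  have hx₀t := hφ x₀ t ▸ hlt _ (mem_interior_strictEpigraph hfc hft)
  have hx₀b := hφ x₀ b ▸ hge (x₀, b) (show (b : EReal) ≤ g x₀ from hb.le)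
  -- `φ (x₀, t) < u ≤ φ (x₀, b)` with `b < t` forces `φ (0, 1) < 0`.
  refine ⟨ℓ, u, -φ (0, 1), by nlinarith, fun x s hs => ?_, fun x s hs => ?_⟩
  · linarith [hφ x s ▸ hle (x, s) hs]
  · linarith [hφ x s ▸ hge (x, s) hs]

theorem exists_affine_between (hf : Convex ℝ (strictEpigraph f))
    (hg : Convex ℝ (hypograph g)) (hgf : ∀ x, g x ≤ f x) (hfc : ContinuousAt f x₀)
    (hfx₀ : f x₀ ≠ ⊤) (hgx₀ : g x₀ ≠ ⊥) :
    ∃ (y : F →L[ℝ] ℝ) (r : ℝ),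
      ∀ x, g x ≤ ((y x - r : ℝ) : EReal) ∧ ((y x - r : ℝ) : EReal) ≤ f x := by
  obtain ⟨ℓ, u, d, hd, hfℓ, hgℓ⟩ := exists_nonvertical_separation hf hg hgf hfc hfx₀ hgx₀
  refine ⟨d⁻¹ • ℓ, d⁻¹ * u, fun x => ⟨?_, ?_⟩⟩
  all_goals rw [smul_apply, smul_eq_mul, ← mul_sub]
  · refine EReal.ge_of_forall_gt_iff_ge.1 fun s hs => ?_
    have := hgℓ x s hs.le
    exact_mod_cast (le_inv_mul_iff₀ hd).2 (by linarith)
  · refine EReal.le_of_forall_lt_iff_le.1 fun s hs => ?_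
    have := hfℓ x s hs
    exact_mod_cast (inv_mul_le_iff₀ hd).2 (by linarith)

theorem exists_coe_le_gconj_sub_fconj {m : ℝ}
    (hm : ∀ x, (m : EReal) ≤ f x - g x)
    (hfconv : ∀ (x y : F) (t : ℝ), 0 ≤ t → t ≤ 1 →
      f (t • x + (1 - t) • y) ≤ ((t : EReal)) * f x + (((1 - t : ℝ) : EReal)) * f y)
    (hgconc : ∀ (x y : F) (t : ℝ), 0 ≤ t → t ≤ 1 →
      ((t : EReal)) * g x + (((1 - t : ℝ) : EReal)) * g y ≤ g (t • x + (1 - t) • y))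
    (hfcont : ContinuousAt f x₀) (hfx₀ : f x₀ ≠ ⊤) (hgx₀ : g x₀ ≠ ⊥) :
    ∃ y : F →L[ℝ] ℝ, (m : EReal) ≤ gconj g y - fconj f y := by
  have hf : ∀ x, f x ≠ ⊥ := fun x hx => by simpa [hx] using hm x
  have hg : ∀ x, g x ≠ ⊤ := fun x hx => by simpa [hx] using hm x
  have hgf : ∀ x, m + g x ≤ f x := fun x =>
    (EReal.le_sub_iff_add_le (.inr (hf x)) (.inl (hg x))).1 (hm x)
  obtain ⟨y, r, hy⟩ := exists_affine_between (convex_strictEpigraph hf hfconv)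
    (hypograph_const_add g m ▸ (convex_hypograph hg hgconc).translate_preimage_right _) hgf
    hfcont hfx₀ (by simpa using hgx₀)
  have hfy : fconj f y ≤ r := fconj_le_coe fun x => (hy x).2
  have hgy : ((r + m : ℝ) : EReal) ≤ gconj g y := coe_le_gconj fun x => by
    rw [show y x - (r + m) = (y x - r) - m by ring, EReal.coe_sub,
      EReal.le_sub_iff_add_le (.inl (EReal.coe_ne_bot m)) (.inl (EReal.coe_ne_top m)), add_comm]
    exact (hy x).1
  refine ⟨y, ?_⟩
  calc (m : EReal) = ((r + m : ℝ) : EReal) - r := by norm_cast; ring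
    _ ≤ gconj g y - fconj f y := EReal.sub_le_sub hgy hfy

end Sandwich

theorem fenchel_rockafellar_duality_general
    (f g : E → EReal)
    (hfconv : ∀ (x y : E) (t : ℝ), 0 ≤ t → t ≤ 1 →
      f (t • x + (1 - t) • y) ≤ ((t : EReal)) * f x + (((1 - t : ℝ) : EReal)) * f y)
    (hgconc : ∀ (x y : E) (t : ℝ), 0 ≤ t → t ≤ 1 →
      ((t : EReal)) * g x + (((1 - t : ℝ) : EReal)) * g y ≤ g (t • x + (1 - t) • y))
    (x₀ : E) (hfcont : ContinuousAt f x₀)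
    (hfx₀ : f x₀ ≠ ⊤ ∧ f x₀ ≠ ⊥) (hgx₀ : g x₀ ≠ ⊤ ∧ g x₀ ≠ ⊥) :
    ∃ y : E →L[ℝ] ℝ,
      (⨅ x : E, f x - g x) = gconj g y - fconj f y ∧
      ∀ y' : E →L[ℝ] ℝ, gconj g y' - fconj f y' ≤ gconj g y - fconj f y := by
  suffices h : ∃ y, (⨅ x, f x - g x) ≤ gconj g y - fconj f y by
    obtain ⟨y, hy⟩ := h
    exact ⟨y, le_antisymm hy (gconj_sub_fconj_le_iInf y),
      fun y' => (gconj_sub_fconj_le_iInf y').trans hy⟩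
  generalize hI : (⨅ x, f x - g x) = I
  induction I using EReal.rec with
  | bot => exact ⟨0, bot_le⟩
  | coe m =>
    exact exists_coe_le_gconj_sub_fconj (le_iInf_iff.1 hI.ge) hfconv hgconc hfcont hfx₀.1 hgx₀.2
  | top =>
    have hx₀ := le_iInf_iff.1 hI.ge x₀
    lift f x₀ to ℝ using hfx₀ with a
    lift g x₀ to ℝ using hgx₀ with b
    exact absurd hx₀ (by exact_mod_cast (EReal.coe_lt_top (a - b)).not_ge)

/-- Fenchel–Rockafellar duality: let `E` be a locally convex Hausdorff real
topological vector space, `f` proper convex, `g` proper concave, and suppose `f` is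
continuous at some point `x₀` where both `f(x₀)` and `g(x₀)` are finite.  Then
`inf_x (f(x) − g(x)) = max_{y ∈ E*} (g_*(y) − f*(y))`, the maximum being attained. -/
theorem fenchel_rockafellar_duality
    (f g : E → EReal)
    (hfnotbot : ∀ x, f x ≠ ⊥) (hfproper : ∃ x, f x ≠ ⊤)
    (hgnottop : ∀ x, g x ≠ ⊤) (hgproper : ∃ x, g x ≠ ⊥)
    (hfconv : ∀ (x y : E) (t : ℝ), 0 ≤ t → t ≤ 1 →
      f (t • x + (1 - t) • y) ≤ ((t : EReal)) * f x + (((1 - t : ℝ) : EReal)) * f y)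
    (hgconc : ∀ (x y : E) (t : ℝ), 0 ≤ t → t ≤ 1 →
      ((t : EReal)) * g x + (((1 - t : ℝ) : EReal)) * g y ≤ g (t • x + (1 - t) • y))
    (x₀ : E) (hfcont : ContinuousAt f x₀)
    (hfx₀ : f x₀ ≠ ⊤ ∧ f x₀ ≠ ⊥) (hgx₀ : g x₀ ≠ ⊤ ∧ g x₀ ≠ ⊥) :
    ∃ y : E →L[ℝ] ℝ,
      (⨅ x : E, f x - g x) = gconj g y - fconj f y ∧
      ∀ y' : E →L[ℝ] ℝ, gconj g y' - fconj f y' ≤ gconj g y - fconj f y :=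
  fenchel_rockafellar_duality_general f g hfconv hgconc x₀ hfcont hfx₀ hgx₀

end
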